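/- arXiv:1610.03515 — 2 statements merged into one kernel-verified Lean document; each statement's English description precedes it below -/
import Mathlib

section
/- Symmetry of the Dirichlet-to-Neumann operator: for all Schwartz functions φ₁, φ₂ : ℝ → ℂ, one has ∫_ℝ φ₁(x) (T_k φ₂)(x) dx = ∫_ℝ φ₂(x) (T_k φ₁)(x) dx (no complex conjugation on either side). -/
/-!
Fubini turns `∫ φ₁ · T_k φ₂` into `∫ m(ξ) φ̂₂(ξ) φ̂₁(-ξ) dξ` for the
symbol `m(ξ) = i ρ(k² − ξ²)`; the double integral converges absolutely because
`|m(ξ)| ≤ |k| + |ξ|` and `φ̂₂` decays rapidly. The symbol is even, so the substitution `ξ ↦ -ξ`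
exchanges the roles of `φ₁` and `φ₂`.
-/

open MeasureTheory

/-- The branch of the complex square root used for the upper half plane:
`ρ(w) := √((|w| + Re w)/2) + i √((|w| − Re w)/2)`; for `Im w ≥ 0` it satisfies
`ρ(w)² = w`, `Re ρ(w) ≥ 0` and `Im ρ(w) ≥ 0`. -/
noncomputable def rho (w : ℂ) : ℂ :=
  (Real.sqrt ((‖w‖ + w.re) / 2) : ℝ) +
    Complex.I * (Real.sqrt ((‖w‖ - w.re) / 2) : ℝ)

/-- The Fourier transform `φ̂(ξ) = (2π)^{−1/2} ∫ e^{−ixξ} φ(x) dx` of a Schwartz function. -/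
noncomputable def ft (φ : SchwartzMap ℝ ℂ) (ξ : ℝ) : ℂ :=
  ((Real.sqrt (2 * Real.pi) : ℝ) : ℂ)⁻¹ *
    ∫ x : ℝ, Complex.exp (-Complex.I * x * ξ) * φ x

/-- The Dirichlet-to-Neumann operator on Schwartz functions:
`(T_k φ)(x) = (2π)^{−1/2} ∫ i ρ(k²−ξ²) e^{ixξ} φ̂(ξ) dξ`. -/
noncomputable def dtn (k : ℂ) (φ : SchwartzMap ℝ ℂ) (x : ℝ) : ℂ :=
  ((Real.sqrt (2 * Real.pi) : ℝ) : ℂ)⁻¹ *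
    ∫ ξ : ℝ, Complex.I * rho (k ^ 2 - (ξ : ℂ) ^ 2) * Complex.exp (Complex.I * x * ξ) * ft φ ξ

open FourierTransform

lemma norm_rho (w : ℂ) : ‖rho w‖ = √‖w‖ := by
  have hre := abs_le.1 (Complex.abs_re_le_norm w)
  rw [Complex.norm_def, Complex.normSq_apply]
  simp only [rho, Complex.add_re, Complex.ofReal_re, Complex.mul_re, Complex.I_re,
    Complex.ofReal_im, Complex.I_im, Complex.add_im, Complex.mul_im]
  ring_nf
  rw [Real.sq_sqrt (by linarith), Real.sq_sqrt (by linarith)]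
  ring_nf

@[fun_prop]
lemma continuous_rho : Continuous rho := by
  unfold rho
  fun_prop

lemma norm_rho_sq_sub_sq_le (k : ℂ) (ξ : ℝ) : ‖rho (k ^ 2 - (ξ : ℂ) ^ 2)‖ ≤ ‖k‖ + |ξ| := by
  have h : ‖k ^ 2 - (ξ : ℂ) ^ 2‖ ≤ (‖k‖ + |ξ|) ^ 2 :=
    calc ‖k ^ 2 - (ξ : ℂ) ^ 2‖ ≤ ‖k ^ 2‖ + ‖(ξ : ℂ) ^ 2‖ := norm_sub_le _ _
      _ = ‖k‖ ^ 2 + |ξ| ^ 2 := by rw [norm_pow, norm_pow, Complex.norm_real, Real.norm_eq_abs]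
      _ ≤ (‖k‖ + |ξ|) ^ 2 := by nlinarith [norm_nonneg k, abs_nonneg ξ]
  rw [norm_rho, Real.sqrt_le_left (by positivity)]
  exact h

lemma ft_eq_fourier (φ : SchwartzMap ℝ ℂ) :
    ft φ = fun ξ => ((√(2 * Real.pi) : ℝ) : ℂ)⁻¹ * 𝓕 φ (ξ / (2 * Real.pi)) := by
  funext ξ
  rw [ft, SchwartzMap.fourier_coe, Real.fourier_real_eq_integral_exp_smul]
  congr 2 with x
  rw [smul_eq_mul]
  congr 2
  push_cast
  field_simp

lemma continuous_ft (φ : SchwartzMap ℝ ℂ) : Continuous (ft φ) := by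
  rw [ft_eq_fourier]
  exact continuous_const.mul ((𝓕 φ).continuous.comp (continuous_id.div_const _))

lemma integrable_ft (φ : SchwartzMap ℝ ℂ) : Integrable (ft φ) := by
  rw [ft_eq_fourier]
  exact ((𝓕 φ).integrable.comp_div (by positivity)).const_mul _

lemma integrable_abs_mul_norm_ft (φ : SchwartzMap ℝ ℂ) :
    Integrable (fun ξ : ℝ => |ξ| * ‖ft φ ξ‖) := by
  have hπ : 0 < 2 * Real.pi := by positivity
  have h := (((𝓕 φ).integrable_pow_mul volume 1).comp_div hπ.ne').const_mul
    (2 * Real.pi * (√(2 * Real.pi))⁻¹)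
  refine h.congr (Filter.Eventually.of_forall fun ξ => ?_)
  simp only [ft_eq_fourier, pow_one, Real.norm_eq_abs, norm_mul, norm_inv, Complex.norm_real,
    abs_div, abs_of_pos hπ, abs_of_nonneg (Real.sqrt_nonneg _)]
  field_simp

lemma integrable_mul_ft_of_norm_le {m : ℝ → ℂ} (hm : AEStronglyMeasurable m) {A B : ℝ}
    (hmAB : ∀ ξ, ‖m ξ‖ ≤ A + B * |ξ|) (φ : SchwartzMap ℝ ℂ) :
    Integrable (fun ξ => m ξ * ft φ ξ) := by
  refine (((integrable_ft φ).norm.const_mul A).add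
    ((integrable_abs_mul_norm_ft φ).const_mul B)).mono'
    (hm.mul (continuous_ft φ).aestronglyMeasurable) (Filter.Eventually.of_forall fun ξ => ?_)
  rw [Pi.add_apply, norm_mul, ← mul_assoc, ← add_mul]
  exact mul_le_mul_of_nonneg_right (hmAB ξ) (norm_nonneg _)

lemma integral_mul_fourierInv_eq {g : ℝ → ℂ} (hg : Integrable g) (φ : SchwartzMap ℝ ℂ) :
    ∫ x : ℝ, φ x * (((√(2 * Real.pi) : ℝ) : ℂ)⁻¹ *
        ∫ ξ : ℝ, g ξ * Complex.exp (Complex.I * x * ξ)) =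
      ∫ ξ : ℝ, g ξ * ft φ (-ξ) := by
  set c : ℂ := ((√(2 * Real.pi) : ℝ) : ℂ)⁻¹
  set F : ℝ × ℝ → ℂ := fun p => c * (Complex.exp (Complex.I * p.1 * p.2) * (φ p.1 * g p.2))
  have hF : Integrable F (volume.prod volume) := by
    refine ((φ.integrable.mul_prod hg).bdd_mul (c := 1) (by fun_prop)
      (Filter.Eventually.of_forall fun p => ?_)).const_mul c
    simp [Complex.norm_exp]
  calc ∫ x : ℝ, φ x * (c * ∫ ξ : ℝ, g ξ * Complex.exp (Complex.I * x * ξ))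
      = ∫ x : ℝ, ∫ ξ : ℝ, F (x, ξ) := by
        congr 1 with x
        rw [← integral_const_mul, ← integral_const_mul]
        congr 1 with ξ
        ring
    _ = ∫ ξ : ℝ, ∫ x : ℝ, F (x, ξ) := integral_integral_swap hF
    _ = ∫ ξ : ℝ, g ξ * ft φ (-ξ) := by
        congr 1 with ξ
        rw [ft, ← integral_const_mul, ← integral_const_mul]
        congr 1 with x
        simp only [F, Complex.ofReal_neg, mul_neg, neg_mul, neg_neg]
        ring

lemma integral_mul_dtn (k : ℂ) (φ₁ φ₂ : SchwartzMap ℝ ℂ) :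
    ∫ x : ℝ, φ₁ x * dtn k φ₂ x =
      ∫ ξ : ℝ, Complex.I * rho (k ^ 2 - (ξ : ℂ) ^ 2) * ft φ₂ ξ * ft φ₁ (-ξ) := by
  have hsymbol : Integrable fun ξ : ℝ => Complex.I * rho (k ^ 2 - (ξ : ℂ) ^ 2) * ft φ₂ ξ :=
    integrable_mul_ft_of_norm_le (A := ‖k‖) (B := 1) (by fun_prop)
      (fun ξ => by simpa using norm_rho_sq_sub_sq_le k ξ) φ₂
  rw [← integral_mul_fourierInv_eq hsymbol]
  congr 1 with x
  rw [dtn]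
  congr 3 with ξ
  ring

theorem dtn_symm_general (k : ℂ) (φ₁ φ₂ : SchwartzMap ℝ ℂ) :
    ∫ x : ℝ, φ₁ x * dtn k φ₂ x = ∫ x : ℝ, φ₂ x * dtn k φ₁ x := by
  rw [integral_mul_dtn, integral_mul_dtn, ← integral_neg_eq_self]
  congr 1 with ξ
  simp only [Complex.ofReal_neg, neg_sq, neg_neg]
  ring

/-- Symmetry of the Dirichlet-to-Neumann operator: for all Schwartz functions `φ₁, φ₂`,
`∫ φ₁ (T_k φ₂) = ∫ φ₂ (T_k φ₁)` (no complex conjugation on either side). -/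
theorem dtn_symm (k : ℂ) (hk : 0 ≤ (k ^ 2).im) (φ₁ φ₂ : SchwartzMap ℝ ℂ) :
    ∫ x : ℝ, φ₁ x * dtn k φ₂ x = ∫ x : ℝ, φ₂ x * dtn k φ₁ x :=
  dtn_symm_general k φ₁ φ₂
end

section
/- Pointwise form of the Rellich radiation inequality for an absorbing medium: let κ ∈ ℂ with α := Re κ > 0 and β := Im κ ≥ 0. Then for every ξ ∈ ℝ, |κ − ξ²| − ξ² + α ≤ (2√α + √2·√β) · Re ρ(κ − ξ²). -/
/-!
With `w = κ - ξ²` and `s = Re ρ(w)`, the left-hand side is `|w| + Re w = 2 s²`. Since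
`|w| ≤ |Re w| + Im w`, this is at most `2 max(Re w, 0) + Im w ≤ 2 max(α, 0) + β`, so
`(2s)² ≤ (2√α)² + (√2 √β)²`, whence `2s ≤ 2√α + √2 √β`; multiplying by `s ≥ 0` gives the claim.
-/

theorem le_add_of_sq_le_sq_add_sq {x a b : ℝ} (ha : 0 ≤ a) (hb : 0 ≤ b)
    (h : x ^ 2 ≤ a ^ 2 + b ^ 2) : x ≤ a + b :=
  (abs_le_of_sq_le_sq' (by nlinarith [mul_nonneg ha hb]) (add_nonneg ha hb)).2

theorem Complex.norm_add_re_le (z : ℂ) : ‖z‖ + z.re ≤ 2 * max z.re 0 + |z.im| := by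
  have hnorm := Complex.norm_le_abs_re_add_abs_im z
  rcases le_total 0 z.re with hre | hre
  · rw [abs_of_nonneg hre, max_eq_left hre] at *
    linarith
  · rw [abs_of_nonpos hre, max_eq_right hre] at *
    linarith

theorem re_rho (w : ℂ) : (rho w).re = √((‖w‖ + w.re) / 2) := by
  simp [rho]

theorem two_mul_re_rho_sq (w : ℂ) : 2 * (rho w).re ^ 2 = ‖w‖ + w.re := by
  have : 0 ≤ ‖w‖ + w.re := by linarith [neg_abs_le w.re, Complex.abs_re_le_norm w]
  rw [re_rho, Real.sq_sqrt (by positivity)]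
  ring

theorem rellich_pointwise_absorbing_general (κ : ℂ) (hβ : 0 ≤ κ.im) (ξ : ℝ) :
    ‖κ - (ξ : ℂ) ^ 2‖ - ξ ^ 2 + κ.re
      ≤ (2 * Real.sqrt κ.re + Real.sqrt 2 * Real.sqrt κ.im) * (rho (κ - (ξ : ℂ) ^ 2)).re := by
  set w := κ - (ξ : ℂ) ^ 2
  have hre : w.re = κ.re - ξ ^ 2 := by simp [w, ← Complex.ofReal_pow]
  have him : w.im = κ.im := by simp [w, ← Complex.ofReal_pow]
  set s := (rho w).re
  have hs : 0 ≤ s := by simp only [s, re_rho]; positivity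
  have hbound : (2 * s) ^ 2 ≤ (2 * √κ.re) ^ 2 + (√2 * √κ.im) ^ 2 := by
    have hmax : max w.re 0 ≤ max κ.re 0 := max_le_max_right 0 (by nlinarith [sq_nonneg ξ])
    rw [mul_pow, mul_pow, mul_pow, Real.sq_sqrt', Real.sq_sqrt zero_le_two, Real.sq_sqrt hβ]
    linarith [two_mul_re_rho_sq w, w.norm_add_re_le, abs_of_nonneg (him ▸ hβ : 0 ≤ w.im)]
  have h2s := le_add_of_sq_le_sq_add_sq (by positivity) (by positivity) hbound
  calc ‖w‖ - ξ ^ 2 + κ.re = 2 * s * s := by linarith [two_mul_re_rho_sq w]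
    _ ≤ (2 * √κ.re + √2 * √κ.im) * s := mul_le_mul_of_nonneg_right h2s hs

/-- Pointwise form of the Rellich radiation inequality for an absorbing medium: if
`κ ∈ ℂ` with `α := Re κ > 0` and `β := Im κ ≥ 0`, then for every `ξ ∈ ℝ`,
`|κ − ξ²| − ξ² + α ≤ (2√α + √2 √β) · Re ρ(κ − ξ²)`. -/
theorem rellich_pointwise_absorbing (κ : ℂ) (hα : 0 < κ.re) (hβ : 0 ≤ κ.im) (ξ : ℝ) :
    ‖κ - (ξ : ℂ) ^ 2‖ - ξ ^ 2 + κ.re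
      ≤ (2 * Real.sqrt κ.re + Real.sqrt 2 * Real.sqrt κ.im) * (rho (κ - (ξ : ℂ) ^ 2)).re :=
  rellich_pointwise_absorbing_general κ hβ ξ
end
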